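/- A 2×2 complex matrix-valued 2-form dZ ∧ A dZ~ (with A ∈ M₂(ℂ) constant, Z~ the adjugate) has all matrix entries anti-self-dual if and only if A is a scalar multiple of the identity matrix. -/
import Mathlib


open Matrix

/-- Coordinate indices on ℂ⁴ ≅ M₂(ℂ): (i,j) labels z_{ij}. -/
abbrev Idx : Type := Fin 2 × Fin 2

/-- The coordinate 1-form dz_{ik}, given by its coefficients in the basis (dz_p). -/
def dz (i k : Fin 2) : Idx → ℂ := fun p => if p = (i, k) then 1 else 0

/-- The matrix of 1-forms dZ : (dZ)_{ik} = dz_{ik}. -/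
def dZ : Fin 2 → Fin 2 → Idx → ℂ := fun i k => dz i k

/-- The matrix of 1-forms dZ~ = [[dz22, −dz12],[−dz21, dz11]]. -/
def dZtilde : Fin 2 → Fin 2 → Idx → ℂ := fun l j =>
  if l = 0 then (if j = 0 then dz 1 1 else -(dz 0 1))
  else (if j = 0 then -(dz 1 0) else dz 0 0)

/-- Product of a constant matrix with a matrix of 1-forms. -/
noncomputable def matMulForm (A : Matrix (Fin 2) (Fin 2) ℂ) (C : Fin 2 → Fin 2 → Idx → ℂ) :
    Fin 2 → Fin 2 → Idx → ℂ :=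
  fun k j p => ∑ l : Fin 2, A k l * C l j p

/-- Wedge of two matrices of 1-forms: the (i,j) entry is a 2-form, recorded by its
    antisymmetric coefficients on dz_p ∧ dz_q. -/
noncomputable def wedge (B C : Fin 2 → Fin 2 → Idx → ℂ) : Fin 2 → Fin 2 → Idx → Idx → ℂ :=
  fun i j p q => ∑ k : Fin 2, (B i k p * C k j q - B i k q * C k j p)

/-- A 2-form (given by antisymmetric coefficients) is anti-self-dual iff its components
    on dz11∧dz21 and dz12∧dz22 vanish and its dz11∧dz22 and dz12∧dz21 components are
    opposite. -/
def IsASD (ω : Idx → Idx → ℂ) : Prop :=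
  ω ((0 : Fin 2), (0 : Fin 2)) ((1 : Fin 2), (0 : Fin 2)) = 0 ∧
  ω ((0 : Fin 2), (1 : Fin 2)) ((1 : Fin 2), (1 : Fin 2)) = 0 ∧
  ω ((0 : Fin 2), (0 : Fin 2)) ((1 : Fin 2), (1 : Fin 2)) =
    -ω ((0 : Fin 2), (1 : Fin 2)) ((1 : Fin 2), (0 : Fin 2))

/-- dZ ∧ A dZ~ is anti-self-dual (entrywise) iff A is a scalar multiple of the
    identity. -/
theorem wedge_dZ_A_dZtilde_antiSelfDual_iff_scalar (A : Matrix (Fin 2) (Fin 2) ℂ) :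
    (∀ i j : Fin 2, IsASD (wedge dZ (matMulForm A dZtilde) i j)) ↔
      ∃ c : ℂ, A = c • (1 : Matrix (Fin 2) (Fin 2) ℂ) := by
  constructor
  · intro h
    refine ⟨A 0 0, ?_⟩
    have h00 := h 0 0
    have h01 := h 0 1
    have h10 := h 1 0
    have h11 := h 1 1
    simp only [IsASD, wedge, matMulForm, dZ, dZtilde, Fin.sum_univ_two] at h00 h01 h10 h11
    norm_num [Prod.ext_iff, Fin.ext_iff] at h00 h01 h10 h11
    simp only [dz] at h00 h01 h10 h11
    norm_num [Prod.ext_iff, Fin.ext_iff] at h00 h01 h10 h11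
    ext i j
    fin_cases i <;> fin_cases j <;> simp [Matrix.one_apply]
    · exact h00.1
    · exact h00.2.1
    · exact h00.2.2.symm
  · rintro ⟨c, rfl⟩ i j
    fin_cases i <;> fin_cases j <;>
      simp only [IsASD, wedge, matMulForm, dZ, dZtilde, Fin.sum_univ_two,
        Matrix.smul_apply, Matrix.one_apply] <;>
      norm_num [Prod.ext_iff, Fin.ext_iff] <;>
      simp only [dz] <;>
      norm_num [Prod.ext_iff, Fin.ext_iff]
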